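/- arXiv:2002.07290 — 4 statements merged into one kernel-verified Lean document; each statement's English description precedes it below -/
import Mathlib

section
/- Under Assumption A1 (φ is M_φ-Lipschitz convex, F has L_F-Lipschitz Jacobian), let F̃ ≈ F(x), J̃ ≈ F'(x), let T̃_M(x) minimize z ↦ φ(F̃ + J̃(z-x)) + (M/2)‖z-x‖², and set G̃_M(x) := M(x - T̃_M(x)). Then for any β_d > 0: φ(F(T̃_M(x))) ≤ φ(F(x)) + 2M_φ‖F(x) - F̃‖ + (M_φ/(2β_d))‖F'(x) - J̃‖² - ((2M - M_φ L_F - β_d M_φ)/2)‖T̃_M(x) - x‖². -/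
/-!
The model `z ↦ φ (F̃ + J̃ (z - x)) + M/2 ‖z - x‖²` is `M`-strongly convex, so comparing its value at
its minimizer `T` with its value at `x` gives `φ (F̃ + J̃ (T - x)) ≤ φ (F̃) - M ‖T - x‖²`.
It remains to move from the model back to `φ ∘ F` with the Lipschitz bound on `φ`: the error
`‖F T - F̃ - J̃ (T - x)‖` is at most the Taylor remainder `L_F/2 ‖T - x‖²` plus
`‖F x - F̃‖ + ‖F' x - J̃‖ ‖T - x‖`, and the last product is split by Young's inequality with weight `β_d`.
-/

open Set Filter Topology

theorem mul_le_sq_div_add_mul_sq {β : ℝ} (hβ : 0 < β) (a b : ℝ) :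
    a * b ≤ a ^ 2 / (2 * β) + β / 2 * b ^ 2 := by
  have key : 0 ≤ (a - β * b) ^ 2 / (2 * β) := by positivity
  calc a * b = a ^ 2 / (2 * β) + β / 2 * b ^ 2 - (a - β * b) ^ 2 / (2 * β) := by
        field_simp; ring
    _ ≤ a ^ 2 / (2 * β) + β / 2 * b ^ 2 := by linarith

theorem nonneg_of_abs_sub_le_mul_norm {G : Type*} [NormedAddCommGroup G] [Nontrivial G]
    {φ : G → ℝ} {K : ℝ} (hφ : ∀ u v, |φ u - φ v| ≤ K * ‖u - v‖) : 0 ≤ K := by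
  obtain ⟨u, v, huv⟩ := exists_pair_ne G
  exact nonneg_of_mul_nonneg_left ((abs_nonneg _).trans (hφ u v))
    (norm_pos_iff.2 (sub_ne_zero.2 huv))

section Normed

variable {E G : Type*} [NormedAddCommGroup E] [NormedSpace ℝ E]
  [NormedAddCommGroup G] [NormedSpace ℝ G]

theorem norm_sub_sub_fderiv_le_of_lipschitz_fderiv {F : E → G} {L : ℝ} (hF : Differentiable ℝ F)
    (hJ : ∀ a b, ‖fderiv ℝ F a - fderiv ℝ F b‖ ≤ L * ‖a - b‖) (x y : E) :
    ‖F y - F x - fderiv ℝ F x (y - x)‖ ≤ L / 2 * ‖y - x‖ ^ 2 := by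
  set v := y - x
  set g : ℝ → G := fun t => F (x + t • v) - F x - t • fderiv ℝ F x v
  have hg : ∀ t : ℝ, HasDerivAt g (fderiv ℝ F (x + t • v) v - fderiv ℝ F x v) t := by
    intro t
    have hline : HasDerivAt (fun s : ℝ => x + s • v) v t := by
      simpa using ((hasDerivAt_id t).smul_const v).const_add x
    have hlin : HasDerivAt (fun s : ℝ => s • fderiv ℝ F x v) (fderiv ℝ F x v) t := by
      simpa using (hasDerivAt_id t).smul_const (fderiv ℝ F x v)
    exact (((hF _).hasFDerivAt.comp_hasDerivAt t hline).sub_const (F x)).sub hlin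
  have hB : ∀ t : ℝ, HasDerivAt (fun s : ℝ => L / 2 * ‖v‖ ^ 2 * s ^ 2) (L * ‖v‖ ^ 2 * t) t :=
    fun t => ((hasDerivAt_pow 2 t).const_mul (L / 2 * ‖v‖ ^ 2)).congr_deriv (by ring)
  have hbound : ∀ t ∈ Ico (0 : ℝ) 1,
      ‖fderiv ℝ F (x + t • v) v - fderiv ℝ F x v‖ ≤ L * ‖v‖ ^ 2 * t := by
    intro t ht
    calc ‖fderiv ℝ F (x + t • v) v - fderiv ℝ F x v‖
        ≤ ‖fderiv ℝ F (x + t • v) - fderiv ℝ F x‖ * ‖v‖ :=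
          (fderiv ℝ F (x + t • v) - fderiv ℝ F x).le_opNorm v
      _ ≤ L * ‖x + t • v - x‖ * ‖v‖ := by gcongr; exact hJ _ _
      _ = L * ‖v‖ ^ 2 * t := by
          rw [add_sub_cancel_left, norm_smul, Real.norm_of_nonneg ht.1]; ring
  have h := image_norm_le_of_norm_deriv_right_le_deriv_boundary
    (fun t _ => (hg t).continuousAt.continuousWithinAt) (fun t _ => (hg t).hasDerivWithinAt)
    (by simp [g]) hB hbound (right_mem_Icc.2 zero_le_one)
  simpa [g, v] using h

theorem ConvexOn.comp_add_apply_sub {φ : G → ℝ} (hφ : ConvexOn ℝ univ φ) (c : G) (A : E →L[ℝ] G)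
    (x : E) : ConvexOn ℝ univ fun z => φ (c + A (z - x)) := by
  have h := (hφ.translate_right (c - A x)).comp_linearMap (A : E →ₗ[ℝ] G)
  rw [preimage_univ, preimage_univ] at h
  convert h using 2 with z
  show φ (c + A (z - x)) = φ (c - A x + A z)
  rw [map_sub, add_sub_assoc', sub_add_eq_add_sub]

theorem ConvexOn.add_mul_norm_sub_sq_le_of_isMinOn {f : E → ℝ} (hf : ConvexOn ℝ univ f) {M : ℝ}
    {x T : E} (hT : IsMinOn (fun z => f z + M / 2 * ‖z - x‖ ^ 2) univ T) :
    f T + M * ‖T - x‖ ^ 2 ≤ f x := by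
  set n := ‖T - x‖
  have hsegment : ∀ t ∈ Ioc (0 : ℝ) 1, f T + M * n ^ 2 ≤ f x + M / 2 * n ^ 2 * t := by
    rintro t ⟨ht0, ht1⟩
    have hmin := isMinOn_iff.mp hT (T + t • (x - T)) (mem_univ _)
    have hconv : f (T + t • (x - T)) ≤ (1 - t) * f T + t * f x := by
      have h := hf.2 (mem_univ T) (mem_univ x) (sub_nonneg.2 ht1) ht0.le (sub_add_cancel 1 t)
      rwa [show (1 - t) • T + t • x = T + t • (x - T) by module] at h
    have hnorm : ‖T + t • (x - T) - x‖ = (1 - t) * n := by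
      rw [show T + t • (x - T) - x = (1 - t) • (T - x) by module, norm_smul,
        Real.norm_of_nonneg (by linarith)]
    rw [hnorm] at hmin
    refine le_of_mul_le_mul_left ?_ ht0
    nlinarith
  have hlim : Tendsto (fun t => f x + M / 2 * n ^ 2 * t) (𝓝[>] 0) (𝓝 (f x)) := by
    have h : Continuous fun t : ℝ => f x + M / 2 * n ^ 2 * t := by fun_prop
    simpa using (h.tendsto 0).mono_left nhdsWithin_le_nhds
  exact ge_of_tendsto hlim (mem_of_superset (Ioc_mem_nhdsGT zero_lt_one) hsegment)

theorem le_of_proxLinear_model_decrease {φ : G → ℝ} {F : E → G} {M_φ L_F M β : ℝ}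
    (hφ : ∀ u v, |φ u - φ v| ≤ M_φ * ‖u - v‖) (hM_φ : 0 ≤ M_φ) (hF : Differentiable ℝ F)
    (hJ : ∀ a b, ‖fderiv ℝ F a - fderiv ℝ F b‖ ≤ L_F * ‖a - b‖) (hβ : 0 < β)
    {x T : E} {Ft : G} {Jt : E →L[ℝ] G}
    (hmodel : φ (Ft + Jt (T - x)) + M * ‖T - x‖ ^ 2 ≤ φ Ft) :
    φ (F T) ≤ φ (F x) + 2 * M_φ * ‖F x - Ft‖ + (M_φ / (2 * β)) * ‖fderiv ℝ F x - Jt‖ ^ 2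
      - ((2 * M - M_φ * L_F - β * M_φ) / 2) * ‖T - x‖ ^ 2 := by
  have hφ_le : ∀ u v, φ u ≤ φ v + M_φ * ‖u - v‖ := fun u v =>
    sub_le_iff_le_add'.1 ((le_abs_self _).trans (hφ u v))
  have herror : ‖F T - (Ft + Jt (T - x))‖
      ≤ L_F / 2 * ‖T - x‖ ^ 2 + ‖F x - Ft‖ + ‖fderiv ℝ F x - Jt‖ * ‖T - x‖ :=
    calc ‖F T - (Ft + Jt (T - x))‖
        = ‖(F T - F x - fderiv ℝ F x (T - x)) + (F x - Ft) + (fderiv ℝ F x - Jt) (T - x)‖ := by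
          rw [sub_apply]; congr 1; abel
      _ ≤ ‖F T - F x - fderiv ℝ F x (T - x)‖ + ‖F x - Ft‖ + ‖(fderiv ℝ F x - Jt) (T - x)‖ :=
          norm_add₃_le
      _ ≤ L_F / 2 * ‖T - x‖ ^ 2 + ‖F x - Ft‖ + ‖fderiv ℝ F x - Jt‖ * ‖T - x‖ := by
          gcongr
          · exact norm_sub_sub_fderiv_le_of_lipschitz_fderiv hF hJ x T
          · exact (fderiv ℝ F x - Jt).le_opNorm _
  have hyoung := mul_le_sq_div_add_mul_sq hβ ‖fderiv ℝ F x - Jt‖ ‖T - x‖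
  have hT_model := hφ_le (F T) (Ft + Jt (T - x))
  have hFt := hφ_le Ft (F x)
  rw [norm_sub_rev] at hFt
  linear_combination hT_model + hFt + hmodel + mul_le_mul_of_nonneg_left herror hM_φ
    + mul_le_mul_of_nonneg_left hyoung hM_φ

end Normed

theorem stmt3 {p q : ℕ}
    (φ : EuclideanSpace ℝ (Fin q) → ℝ)
    (F : EuclideanSpace ℝ (Fin p) → EuclideanSpace ℝ (Fin q))
    (M_φ L_F M β_d : ℝ)
    (hconv : ConvexOn ℝ Set.univ φ)
    (hφ : ∀ u v, |φ u - φ v| ≤ M_φ * ‖u - v‖)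
    (hF : Differentiable ℝ F)
    (hJ : ∀ x y, ‖fderiv ℝ F x - fderiv ℝ F y‖ ≤ L_F * ‖x - y‖)
    (hM : 0 < M) (hβ : 0 < β_d)
    (x T : EuclideanSpace ℝ (Fin p))
    (Ft : EuclideanSpace ℝ (Fin q))
    (Jt : EuclideanSpace ℝ (Fin p) →L[ℝ] EuclideanSpace ℝ (Fin q))
    (hT : IsMinOn (fun z => φ (Ft + Jt (z - x)) + (M / 2) * ‖z - x‖ ^ 2) Set.univ T) :
    φ (F T) ≤ φ (F x) + 2 * M_φ * ‖F x - Ft‖ + (M_φ / (2 * β_d)) * ‖fderiv ℝ F x - Jt‖ ^ 2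
      - ((2 * M - M_φ * L_F - β_d * M_φ) / 2) * ‖T - x‖ ^ 2 := by
  have hmodel := (hconv.comp_add_apply_sub Ft Jt x).add_mul_norm_sub_sq_le_of_isMinOn hT
  simp only [sub_self, map_zero, add_zero] at hmodel
  rcases subsingleton_or_nontrivial (EuclideanSpace ℝ (Fin q)) with hq | hq
  · -- `q = 0`: the model is constant, so `T = x` and every error term vanishes
    rw [Subsingleton.elim (Ft + Jt (T - x)) Ft, add_le_iff_nonpos_right] at hmodel
    have hTx : ‖T - x‖ = 0 := pow_eq_zero_iff two_ne_zero |>.1 <|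
      le_antisymm (nonpos_of_mul_nonpos_right hmodel hM) (sq_nonneg _)
    rw [Subsingleton.elim (F T) (F x), Subsingleton.elim Ft (F x),
      Subsingleton.elim Jt (fderiv ℝ F x), hTx]
    simp
  · exact le_of_proxLinear_model_decrease hφ (nonneg_of_abs_sub_le_mul_norm hφ) hF hJ hβ hmodel
end

section
/- Let φ : ℝ^q → ℝ be convex and M_φ-Lipschitz, F : ℝ^p → ℝ^q continuously differentiable with L_F-Lipschitz Jacobian. Fix x ∈ ℝ^p, approximations F̃ ∈ ℝ^q, J̃ ∈ ℝ^{q×p}, and M > 0. Let T̃ be the minimizer of z ↦ φ(F̃ + J̃(z-x)) + (M/2)‖z-x‖², G̃ := M(x - T̃), and let y ∈ ∂φ(F̃ + J̃(T̃ - x)) be the subgradient certifying optimality (so J̃ᵀy = M(x - T̃)). Then ‖F'(T̃)ᵀ y‖ ≤ (1 + M_φ L_F / M) ‖G̃‖ + M_φ ‖F'(x) - J̃‖. -/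
/-!
Split `F'(T) = J̃ + (F'(T) - F'(x)) + (F'(x) - J̃)`. By optimality `J̃ᵀ y = G̃`; the other two
terms are bounded by their operator norms times `‖y‖`, and `‖y‖ ≤ M_φ` because `y` is a
subgradient of an `M_φ`-Lipschitz function. Finally `‖F'(T) - F'(x)‖ ≤ L_F ‖T - x‖ = L_F ‖G̃‖ / M`.
-/

open ContinuousLinearMap

section Subgradient

variable {E : Type*} [NormedAddCommGroup E] {φ : E → ℝ} {K : ℝ}

theorem nonneg_of_sub_le_mul_norm_sub [Nontrivial E]
    (hφ : ∀ u v, φ u - φ v ≤ K * ‖u - v‖) : 0 ≤ K := by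
  obtain ⟨u, hu⟩ := exists_ne (0 : E)
  have h : 0 ≤ K * (2 * ‖u‖) := by
    have h₁ := hφ u 0
    have h₂ := hφ 0 u
    simp only [sub_zero, zero_sub, norm_neg] at h₁ h₂
    linarith
  exact nonneg_of_mul_nonneg_left h (by positivity)

/-- Testing the subgradient inequality at `v = w + y` gives `‖y‖² ≤ φ (w + y) - φ w ≤ K ‖y‖`. -/
theorem norm_le_of_subgradient [InnerProductSpace ℝ E] [Nontrivial E]
    (hφ : ∀ u v, φ u - φ v ≤ K * ‖u - v‖)
    {w y : E} (hsub : ∀ v, φ w + inner ℝ y (v - w) ≤ φ v) : ‖y‖ ≤ K := by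
  rcases eq_or_ne y 0 with rfl | hy
  · simpa using nonneg_of_sub_le_mul_norm_sub hφ
  have hsq : ‖y‖ * ‖y‖ ≤ K * ‖y‖ := by
    have hlow := hsub (w + y)
    have hup := hφ (w + y) w
    simp only [add_sub_cancel_left, real_inner_self_eq_norm_mul_norm] at hlow hup
    linarith
  exact le_of_mul_le_mul_right hsq (norm_pos_iff.mpr hy)

end Subgradient

theorem norm_adjoint_apply_le_add {E F : Type*} [NormedAddCommGroup E] [InnerProductSpace ℝ E]
    [CompleteSpace E] [NormedAddCommGroup F] [InnerProductSpace ℝ F] [CompleteSpace F]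
    (A B J : E →L[ℝ] F) (y : F) :
    ‖adjoint A y‖ ≤ ‖adjoint J y‖ + (‖A - B‖ + ‖B - J‖) * ‖y‖ := by
  have hsplit : adjoint A y = adjoint J y + adjoint (A - B) y + adjoint (B - J) y := by
    simp only [map_sub, sub_apply]
    abel
  calc ‖adjoint A y‖
      ≤ ‖adjoint J y‖ + ‖adjoint (A - B) y‖ + ‖adjoint (B - J) y‖ :=
        hsplit ▸ norm_add₃_le
    _ ≤ ‖adjoint J y‖ + ‖A - B‖ * ‖y‖ + ‖B - J‖ * ‖y‖ := by
        gcongr <;> exact (le_opNorm _ _).trans_eq (by rw [adjoint.norm_map])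
    _ = ‖adjoint J y‖ + (‖A - B‖ + ‖B - J‖) * ‖y‖ := by ring

theorem stmt10_general {p q : ℕ}
    (φ : EuclideanSpace ℝ (Fin q) → ℝ)
    (F : EuclideanSpace ℝ (Fin p) → EuclideanSpace ℝ (Fin q))
    (M_φ L_F M : ℝ) (hM : 0 < M)
    (hφ : ∀ u v, |φ u - φ v| ≤ M_φ * ‖u - v‖)
    (hJ : ∀ x y, ‖fderiv ℝ F x - fderiv ℝ F y‖ ≤ L_F * ‖x - y‖)
    (x T : EuclideanSpace ℝ (Fin p))
    (Ft : EuclideanSpace ℝ (Fin q))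
    (Jt : EuclideanSpace ℝ (Fin p) →L[ℝ] EuclideanSpace ℝ (Fin q))
    (y : EuclideanSpace ℝ (Fin q))
    (hsub : ∀ v, φ (Ft + Jt (T - x)) + (inner ℝ y (v - (Ft + Jt (T - x))) : ℝ) ≤ φ v)
    (hopt : ContinuousLinearMap.adjoint Jt y = M • (x - T)) :
    ‖ContinuousLinearMap.adjoint (fderiv ℝ F T) y‖
      ≤ (1 + M_φ * L_F / M) * ‖M • (x - T)‖ + M_φ * ‖fderiv ℝ F x - Jt‖ := by
  -- for `q = 0` the bound `‖y‖ ≤ M_φ` can fail, as `M_φ` may be negative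
  rcases subsingleton_or_nontrivial (EuclideanSpace ℝ (Fin q)) with hq | hq
  · obtain rfl : y = 0 := Subsingleton.elim y 0
    have hBJ : fderiv ℝ F x - Jt = 0 := Subsingleton.elim _ _
    simp [← hopt, hBJ]
  have hy : ‖y‖ ≤ M_φ :=
    norm_le_of_subgradient (fun u v => (le_abs_self _).trans (hφ u v)) hsub
  have hL_F : 0 ≤ L_F * ‖T - x‖ := (norm_nonneg _).trans (hJ T x)
  calc ‖adjoint (fderiv ℝ F T) y‖
      ≤ ‖adjoint Jt y‖ + (‖fderiv ℝ F T - fderiv ℝ F x‖ + ‖fderiv ℝ F x - Jt‖) * ‖y‖ :=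
        norm_adjoint_apply_le_add _ _ _ y
    _ ≤ ‖M • (x - T)‖ + (L_F * ‖T - x‖ + ‖fderiv ℝ F x - Jt‖) * M_φ := by
        rw [hopt]
        gcongr
        exact hJ T x
    _ = (1 + M_φ * L_F / M) * ‖M • (x - T)‖ + M_φ * ‖fderiv ℝ F x - Jt‖ := by
        rw [norm_smul, Real.norm_of_nonneg hM.le, norm_sub_rev T x]
        field_simp
        ring

theorem stmt10 {p q : ℕ}
    (φ : EuclideanSpace ℝ (Fin q) → ℝ)
    (F : EuclideanSpace ℝ (Fin p) → EuclideanSpace ℝ (Fin q))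
    (M_φ L_F M : ℝ) (hM : 0 < M)
    (hconv : ConvexOn ℝ Set.univ φ)
    (hφ : ∀ u v, |φ u - φ v| ≤ M_φ * ‖u - v‖)
    (hF : Differentiable ℝ F)
    (hJ : ∀ x y, ‖fderiv ℝ F x - fderiv ℝ F y‖ ≤ L_F * ‖x - y‖)
    (x T : EuclideanSpace ℝ (Fin p))
    (Ft : EuclideanSpace ℝ (Fin q))
    (Jt : EuclideanSpace ℝ (Fin p) →L[ℝ] EuclideanSpace ℝ (Fin q))
    (y : EuclideanSpace ℝ (Fin q))
    (hsub : ∀ v, φ (Ft + Jt (T - x)) + (inner ℝ y (v - (Ft + Jt (T - x))) : ℝ) ≤ φ v)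
    (hopt : ContinuousLinearMap.adjoint Jt y = M • (x - T)) :
    ‖ContinuousLinearMap.adjoint (fderiv ℝ F T) y‖
      ≤ (1 + M_φ * L_F / M) * ‖M • (x - T)‖ + M_φ * ‖fderiv ℝ F x - Jt‖ :=
  stmt10_general φ F M_φ L_F M hM hφ hJ x T Ft Jt y hsub hopt
end

section
/- In the setting of the approximate prox-linear step: with T̃ the minimizer of z ↦ φ(F̃ + J̃(z-x)) + (M/2)‖z-x‖², G̃ := M(x - T̃), and r_D := F̃ + J̃(T̃ - x) - F(T̃), one has ‖r_D‖ ≤ ‖F̃ - F(x)‖ + (1/2)‖F'(x) - J̃‖² + ((1 + L_F)/(2M²))‖G̃‖². -/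
/-!
The residual splits as `(F̃ - F x) - (F' x - J̃)(T̃ - x) - (F T̃ - F x - F' x (T̃ - x))`.
Young's inequality bounds the middle term by `‖F' x - J̃‖² / 2 + ‖T̃ - x‖² / 2`, the descent
lemma bounds the Taylor remainder by `L_F / 2 * ‖T̃ - x‖²`, and `‖G̃‖ = M ‖T̃ - x‖`.
-/

open Set

/- The descent lemma. Along `t ↦ x + t • (y - x)` the remainder has derivative of norm at most
`L ‖y - x‖² t`, and the fencing theorem integrates this to `L ‖y - x‖² t² / 2`. -/
theorem norm_sub_sub_fderiv_apply_le {E F : Type*} [NormedAddCommGroup E] [NormedSpace ℝ E]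
    [NormedAddCommGroup F] [NormedSpace ℝ F] {f : E → F} {L : ℝ} (hf : Differentiable ℝ f)
    (hL : ∀ x y, ‖fderiv ℝ f x - fderiv ℝ f y‖ ≤ L * ‖x - y‖) (x y : E) :
    ‖f y - f x - fderiv ℝ f x (y - x)‖ ≤ L / 2 * ‖y - x‖ ^ 2 := by
  set v := y - x
  let g : ℝ → F := fun t => f (x + t • v) - f x - t • fderiv ℝ f x v
  have hg : ∀ t : ℝ, HasDerivAt g (fderiv ℝ f (x + t • v) v - fderiv ℝ f x v) t := by
    intro t
    have hline : HasDerivAt (fun t : ℝ => x + t • v) v t := by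
      simpa using ((hasDerivAt_id t).smul_const v).const_add x
    have := (((hf _).hasFDerivAt.comp_hasDerivAt t hline).sub_const (f x)).sub
      ((hasDerivAt_id t).smul_const (fderiv ℝ f x v))
    rwa [one_smul] at this
  have hg_bound : ∀ t ∈ Ico (0 : ℝ) 1,
      ‖fderiv ℝ f (x + t • v) v - fderiv ℝ f x v‖ ≤ L * ‖v‖ ^ 2 * t := by
    intro t ht
    calc ‖fderiv ℝ f (x + t • v) v - fderiv ℝ f x v‖
        = ‖(fderiv ℝ f (x + t • v) - fderiv ℝ f x) v‖ := rfl
      _ ≤ ‖fderiv ℝ f (x + t • v) - fderiv ℝ f x‖ * ‖v‖ := ContinuousLinearMap.le_opNorm _ _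
      _ ≤ L * ‖x + t • v - x‖ * ‖v‖ := by gcongr; exact hL _ _
      _ = L * ‖v‖ ^ 2 * t := by
        rw [add_sub_cancel_left, norm_smul, Real.norm_of_nonneg ht.1]; ring
  have hB : ∀ t : ℝ, HasDerivAt (fun t => L * ‖v‖ ^ 2 / 2 * t ^ 2) (L * ‖v‖ ^ 2 * t) t := by
    intro t
    exact ((hasDerivAt_pow 2 t).const_mul (L * ‖v‖ ^ 2 / 2)).congr_deriv (by norm_num; ring)
  have := image_norm_le_of_norm_deriv_right_le_deriv_boundary
    (fun t _ => (hg t).continuousAt.continuousWithinAt) (fun t _ => (hg t).hasDerivWithinAt)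
    (by simp [g]) hB hg_bound (right_mem_Icc.2 zero_le_one)
  convert this using 1 <;> simp [g, v]
  ring

theorem stmt11_general {p q : ℕ}
    (F : EuclideanSpace ℝ (Fin p) → EuclideanSpace ℝ (Fin q))
    (L_F M : ℝ) (hM : 0 < M)
    (hF : Differentiable ℝ F)
    (hJ : ∀ x y, ‖fderiv ℝ F x - fderiv ℝ F y‖ ≤ L_F * ‖x - y‖)
    (x T : EuclideanSpace ℝ (Fin p))
    (Ft : EuclideanSpace ℝ (Fin q))
    (Jt : EuclideanSpace ℝ (Fin p) →L[ℝ] EuclideanSpace ℝ (Fin q)) :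
    ‖Ft + Jt (T - x) - F T‖
      ≤ ‖Ft - F x‖ + (1 / 2) * ‖fderiv ℝ F x - Jt‖ ^ 2
        + ((1 + L_F) / (2 * M ^ 2)) * ‖M • (x - T)‖ ^ 2 := by
  have hsplit : Ft + Jt (T - x) - F T
      = (Ft - F x) - (fderiv ℝ F x - Jt) (T - x) - (F T - F x - fderiv ℝ F x (T - x)) := by
    simp only [sub_apply]
    abel
  have hyoung : ‖(fderiv ℝ F x - Jt) (T - x)‖
      ≤ (1 / 2) * ‖fderiv ℝ F x - Jt‖ ^ 2 + (1 / 2) * ‖T - x‖ ^ 2 := by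
    have := two_mul_le_add_sq ‖fderiv ℝ F x - Jt‖ ‖T - x‖
    linarith [(fderiv ℝ F x - Jt).le_opNorm (T - x)]
  have htaylor := norm_sub_sub_fderiv_apply_le hF hJ x T
  have hG : ((1 + L_F) / (2 * M ^ 2)) * ‖M • (x - T)‖ ^ 2 = (1 + L_F) / 2 * ‖T - x‖ ^ 2 := by
    rw [norm_smul, Real.norm_of_nonneg hM.le, norm_sub_rev]
    field_simp
  rw [hsplit, hG]
  linarith [norm_sub_le (Ft - F x - (fderiv ℝ F x - Jt) (T - x)) (F T - F x - fderiv ℝ F x (T - x)),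
    norm_sub_le (Ft - F x) ((fderiv ℝ F x - Jt) (T - x))]

theorem stmt11 {p q : ℕ}
    (F : EuclideanSpace ℝ (Fin p) → EuclideanSpace ℝ (Fin q))
    (φ : EuclideanSpace ℝ (Fin q) → ℝ)
    (M_φ L_F M : ℝ) (hM : 0 < M)
    (hconv : ConvexOn ℝ Set.univ φ)
    (hφ : ∀ u v, |φ u - φ v| ≤ M_φ * ‖u - v‖)
    (hF : Differentiable ℝ F)
    (hJ : ∀ x y, ‖fderiv ℝ F x - fderiv ℝ F y‖ ≤ L_F * ‖x - y‖)
    (x T : EuclideanSpace ℝ (Fin p))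
    (Ft : EuclideanSpace ℝ (Fin q))
    (Jt : EuclideanSpace ℝ (Fin p) →L[ℝ] EuclideanSpace ℝ (Fin q)) :
    ‖Ft + Jt (T - x) - F T‖
      ≤ ‖Ft - F x‖ + (1 / 2) * ‖fderiv ℝ F x - Jt‖ ^ 2
        + ((1 + L_F) / (2 * M ^ 2)) * ‖M • (x - T)‖ ^ 2 :=
  stmt11_general F L_F M hM hF hJ x T Ft Jt
end

section
/- Let ℒ_t := E[Ψ(x_t)] + (a_t/2) E[‖F̃_t - F(x_t)‖²] + (c_t/2) E[‖J̃_t - F'(x_t)‖²] be a Lyapunov function. Suppose E[Ψ(x_{t+1})] ≤ E[Ψ(x_t)] - (C_g/2)E[‖x_{t+1}-x_t‖²] + (M_φ/ξ)E[‖F̃_t - F(x_t)‖²] + (M_φ/(2β_d))E[‖J̃_t - F'(x_t)‖²] + M_φ ξ, and the estimator recursions E[‖F̃_{t+1} - F(x_{t+1})‖²] ≤ E[‖F̃_t - F(x_t)‖²] + (M_F²/b_{t+1})E[‖x_{t+1}-x_t‖²] and E[‖J̃_{t+1} - F'(x_{t+1})‖²] ≤ E[‖J̃_t - F'(x_t)‖²]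 + (L_F²/b̂_{t+1})E[‖x_{t+1}-x_t‖²] hold. If a_t ≥ a_{t+1} + 2M_φ/ξ and c_t ≥ c_{t+1} + M_φ/β_d, then ℒ_{t+1} ≤ ℒ_t - (ρ_{t+1}/2)E[‖x_{t+1}-x_t‖²] + M_φ ξ, where ρ_{t+1} := C_g - M_F² a_{t+1}/b_{t+1} - L_F² c_{t+1}/b̂_{t+1}. -/
/-! Each error term `κ e_t` in the descent inequality is paid for by the drop `a_t ≥ a_{t+1} + 2κ`
of its Lyapunov weight, and the growth of the error allowed by its recursion, weighted by
`a_{t+1}/2`, is charged to the step length `‖x_{t+1} - x_t‖²`; this is what lowers `C_g` to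
`ρ_{t+1}`. -/

theorem half_mul_add_mul_le_of_le_add {a a' κ e e' L d : ℝ} (ha' : 0 ≤ a') (he : 0 ≤ e)
    (hrec : e' ≤ e + L * d) (hweight : a' + 2 * κ ≤ a) :
    a' / 2 * e' + κ * e ≤ a / 2 * e + a' / 2 * L * d :=
  calc a' / 2 * e' + κ * e ≤ a' / 2 * (e + L * d) + κ * e := by gcongr
    _ = (a' + 2 * κ) / 2 * e + a' / 2 * L * d := by ring
    _ ≤ a / 2 * e + a' / 2 * L * d := by gcongr

theorem stmt13_general
    (P f j d a c bb bh : ℕ → ℝ) (t : ℕ)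
    (C_g M_φ M_F L_F ξ β_d : ℝ)
    (hf : ∀ s, 0 ≤ f s) (hj : ∀ s, 0 ≤ j s)
    (ha : ∀ s, 0 ≤ a s) (hc : ∀ s, 0 ≤ c s)
    (hdesc : P (t + 1) ≤ P t - (C_g / 2) * d t + (M_φ / ξ) * f t
        + (M_φ / (2 * β_d)) * j t + M_φ * ξ)
    (hFrec : f (t + 1) ≤ f t + (M_F ^ 2 / bb (t + 1)) * d t)
    (hJrec : j (t + 1) ≤ j t + (L_F ^ 2 / bh (t + 1)) * d t)
    (haRec : a t ≥ a (t + 1) + 2 * M_φ / ξ)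
    (hcRec : c t ≥ c (t + 1) + M_φ / β_d) :
    P (t + 1) + (a (t + 1) / 2) * f (t + 1) + (c (t + 1) / 2) * j (t + 1)
      ≤ P t + (a t / 2) * f t + (c t / 2) * j t
        - ((C_g - M_F ^ 2 * a (t + 1) / bb (t + 1) - L_F ^ 2 * c (t + 1) / bh (t + 1)) / 2) * d t
        + M_φ * ξ := by
  have hF := half_mul_add_mul_le_of_le_add (a := a t) (κ := M_φ / ξ)
    (ha (t + 1)) (hf t) hFrec (by linear_combination haRec)
  have hJ := half_mul_add_mul_le_of_le_add (a := c t) (κ := M_φ / (2 * β_d))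
    (hc (t + 1)) (hj t) hJrec (by linear_combination hcRec)
  linear_combination hdesc + hF + hJ

theorem stmt13
    (P f j d a c bb bh : ℕ → ℝ) (t : ℕ)
    (C_g M_φ M_F L_F ξ β_d : ℝ)
    (hCg : 0 < C_g) (hMφ : 0 < M_φ) (hMF : 0 < M_F) (hLF : 0 < L_F)
    (hξ : 0 < ξ) (hβ : 0 < β_d)
    (hf : ∀ s, 0 ≤ f s) (hj : ∀ s, 0 ≤ j s) (hd : ∀ s, 0 ≤ d s)
    (ha : ∀ s, 0 ≤ a s) (hc : ∀ s, 0 ≤ c s)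
    (hb : ∀ s, 0 < bb s) (hbh : ∀ s, 0 < bh s)
    (hdesc : P (t + 1) ≤ P t - (C_g / 2) * d t + (M_φ / ξ) * f t
        + (M_φ / (2 * β_d)) * j t + M_φ * ξ)
    (hFrec : f (t + 1) ≤ f t + (M_F ^ 2 / bb (t + 1)) * d t)
    (hJrec : j (t + 1) ≤ j t + (L_F ^ 2 / bh (t + 1)) * d t)
    (haRec : a t ≥ a (t + 1) + 2 * M_φ / ξ)
    (hcRec : c t ≥ c (t + 1) + M_φ / β_d) :
    P (t + 1) + (a (t + 1) / 2) * f (t + 1) + (c (t + 1) / 2) * j (t + 1)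
      ≤ P t + (a t / 2) * f t + (c t / 2) * j t
        - ((C_g - M_F ^ 2 * a (t + 1) / bb (t + 1) - L_F ^ 2 * c (t + 1) / bh (t + 1)) / 2) * d t
        + M_φ * ξ :=
  stmt13_general P f j d a c bb bh t C_g M_φ M_F L_F ξ β_d hf hj ha hc hdesc hFrec hJrec haRec hcRec
end
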